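/- Let A be a Schur ring over a finite abelian group G = G₁ × G₂ such that G₁ and G₂ are A-subgroups. Then for every basic set X of A and each i ∈ {1,2}, the projection X_{G_i} of X to G_i is a basic set of A. -/

import Mathlib

open scoped BigOperators

/-- The indicator element `X̲ = Σ_{x∈X} x` of a finset in the integral group ring `ℤG`. -/
noncomputable def grpInd {G : Type*} [Group G] (X : Finset G) : MonoidAlgebra ℤ G :=
  ∑ x ∈ X, MonoidAlgebra.single x (1 : ℤ)

/-- A Schur ring over a finite group `G`: a partition of `G` containing `{1}`,
closed under inverses, whose indicator elements span a subring of `ℤG`. -/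
structure SchurRing (G : Type*) [Group G] [Fintype G] [DecidableEq G] where
  parts : Finset (Finset G)
  nonempty_mem : ∀ X ∈ parts, X.Nonempty
  cover : ∀ g : G, ∃ X ∈ parts, g ∈ X
  pairwise_disjoint : ∀ X ∈ parts, ∀ Y ∈ parts, X ≠ Y → Disjoint X Y
  one_mem : ({1} : Finset G) ∈ parts
  inv_mem : ∀ X ∈ parts, X.image (·⁻¹) ∈ parts
  mul_mem : ∀ X ∈ parts, ∀ Y ∈ parts, ∃ c : Finset G → ℤ,
    grpInd X * grpInd Y = ∑ Z ∈ parts, c Z • grpInd Z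

namespace SchurRing

variable {G : Type*} [Group G] [Fintype G] [DecidableEq G]

/-- The underlying `ℤ`-module of the Schur ring: the span of the indicators of basic sets. -/
noncomputable def carrier (A : SchurRing G) : Submodule ℤ (MonoidAlgebra ℤ G) :=
  Submodule.span ℤ {v | ∃ X ∈ A.parts, v = grpInd X}

/-- `X ⊆ G` is an `A`-set if its indicator lies in `A`. -/
def IsASet (A : SchurRing G) (X : Finset G) : Prop := grpInd X ∈ A.carrier

/-- `A` is a subring of `B` (as S-rings over the same group). -/
def le (A B : SchurRing G) : Prop := ∀ X ∈ A.parts, grpInd X ∈ B.carrier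

end SchurRing

/-- An algebraic isomorphism of Schur rings: a bijection of basic sets preserving all
structure constants (the structure constant `c^Z_{X,Y}` is the coefficient of the
product `X̲·Y̲` at any `z ∈ Z`). -/
def IsAlgIso {G G' : Type*} [Group G] [Fintype G] [DecidableEq G]
    [Group G'] [Fintype G'] [DecidableEq G']
    (A : SchurRing G) (A' : SchurRing G') (φ : Finset G → Finset G') : Prop :=
  Set.BijOn φ ↑A.parts ↑A'.parts ∧
  ∀ X ∈ A.parts, ∀ Y ∈ A.parts, ∀ Z ∈ A.parts, ∀ z ∈ Z, ∀ z' ∈ φ Z,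
    (grpInd X * grpInd Y).coeff z = (grpInd (φ X) * grpInd (φ Y)).coeff z'

/-- A combinatorial isomorphism of Schur rings: a bijection `G → G'` mapping basic sets to
basic sets and inducing a Cayley graph isomorphism on each basic set. -/
def IsCombIso {G G' : Type*} [Group G] [Fintype G] [DecidableEq G]
    [Group G'] [Fintype G'] [DecidableEq G']
    (A : SchurRing G) (A' : SchurRing G') (f : G → G') : Prop :=
  Function.Bijective f ∧
  ∀ X ∈ A.parts, X.image f ∈ A'.parts ∧
    ∀ g h : G, h * g⁻¹ ∈ X ↔ f h * (f g)⁻¹ ∈ X.image f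

/-- An automorphism of a Schur ring: a permutation of `G` preserving the edge set of
`Cay(G,X)` for every basic set `X`. -/
def IsSchurAut {G : Type*} [Group G] [Fintype G] [DecidableEq G]
    (A : SchurRing G) (f : G → G) : Prop :=
  Function.Bijective f ∧ ∀ X ∈ A.parts, ∀ g h : G, h * g⁻¹ ∈ X ↔ f h * (f g)⁻¹ ∈ X

/-- Separability with respect to the class of (finite) abelian groups. -/
def SchurRing.IsSeparableAbelian {G : Type} [Group G] [Fintype G] [DecidableEq G]
    (A : SchurRing G) : Prop :=
  ∀ (G' : Type) [CommGroup G'] [Fintype G'] [DecidableEq G'],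
    ∀ (A' : SchurRing G') (φ : Finset G → Finset G'),
    IsAlgIso A A' φ →
    ∃ f : G → G', IsCombIso A A' f ∧ ∀ X ∈ A.parts, φ X = X.image f

/-! For `v` in a Schur ring `A`, the set `{g | 0 < v g}` is a union of basic sets; this applies
to an `A`-set `S` and to the product set `UV` of two `A`-sets. Given `A`-subgroups `H`, `K` with
`H ∩ K = 1` and a basic set `X`, let `W` be the basic set through a point `x₀k₀` of `XK ∩ H`. Then
`W ⊆ XK ∩ H`, and `X ⊆ WK` since `x₀ ∈ WK`. An element `xk` of `XK ∩ H` is then `wk'k` with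
`w ∈ W ⊆ H`, so `k'k ∈ H ∩ K = 1` and `xk = w`; hence `XK ∩ H = W`. For `G = G₁ × G₂` the set
`XG₂ ∩ G₁` is the projection of `X` to `G₁`. -/

open scoped Pointwise
open Finset

section GroupRing

variable {G : Type*} [Group G] [DecidableEq G]

lemma coeff_grpInd (X : Finset G) (g : G) :
    (grpInd X).coeff g = if g ∈ X then 1 else 0 := by
  simp [grpInd, MonoidAlgebra.coeff_sum, MonoidAlgebra.coeff_single, Finsupp.single_apply]

lemma coeff_grpInd_mul_grpInd (U V : Finset G) (g : G) :
    (grpInd U * grpInd V).coeff g = ∑ u ∈ U, ∑ v ∈ V, if u * v = g then 1 else 0 := by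
  simp [grpInd, Finset.sum_mul_sum, MonoidAlgebra.single_mul_single, MonoidAlgebra.coeff_sum,
    MonoidAlgebra.coeff_single, Finsupp.single_apply]

lemma coeff_grpInd_mul_grpInd_pos_iff (U V : Finset G) (g : G) :
    0 < (grpInd U * grpInd V).coeff g ↔ g ∈ U * V := by
  simp only [coeff_grpInd_mul_grpInd, Finset.mem_mul]
  constructor
  · intro h
    by_contra! hc
    rw [Finset.sum_eq_zero fun u hu => Finset.sum_eq_zero fun v hv => if_neg (hc u hu v hv)] at h
    exact h.false
  · rintro ⟨u, hu, v, hv, rfl⟩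
    exact Finset.sum_pos' (fun _ _ => Finset.sum_nonneg fun _ _ => by positivity)
      ⟨u, hu, Finset.sum_pos' (fun _ _ => by positivity) ⟨v, hv, by simp⟩⟩

end GroupRing

namespace SchurRing

variable {G : Type*} [Group G] [Fintype G] [DecidableEq G] (A : SchurRing G)

lemma isASet_of_mem_parts {X : Finset G} (hX : X ∈ A.parts) : A.IsASet X :=
  Submodule.subset_span ⟨X, hX, rfl⟩

lemma mul_mem_carrier {v w : MonoidAlgebra ℤ G} (hv : v ∈ A.carrier) (hw : w ∈ A.carrier) :
    v * w ∈ A.carrier := by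
  have hmul : A.carrier * A.carrier ≤ A.carrier := by
    rw [carrier, Submodule.span_mul_span, Submodule.span_le]
    rintro _ ⟨_, ⟨X, hX, rfl⟩, _, ⟨Y, hY, rfl⟩, rfl⟩
    obtain ⟨c, hc⟩ := A.mul_mem X hX Y hY
    simp only [SetLike.mem_coe, hc]
    exact Submodule.sum_mem _ fun Z hZ => Submodule.smul_mem _ _ (A.isASet_of_mem_parts hZ)
  exact hmul (Submodule.mul_mem_mul hv hw)

lemma coeff_eq_of_mem_carrier {v : MonoidAlgebra ℤ G} (hv : v ∈ A.carrier) {X : Finset G}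
    (hX : X ∈ A.parts) {x y : G} (hx : x ∈ X) (hy : y ∈ X) : v.coeff x = v.coeff y := by
  induction hv using Submodule.span_induction with
  | mem _ hw =>
    obtain ⟨Y, hY, rfl⟩ := hw
    rw [coeff_grpInd, coeff_grpInd]
    by_cases hXY : X = Y
    · subst hXY; simp [hx, hy]
    · have hd := A.pairwise_disjoint X hX Y hY hXY
      simp [Finset.disjoint_left.mp hd hx, Finset.disjoint_left.mp hd hy]
  | zero => rfl
  | add _ _ _ _ ihv ihw => simp only [MonoidAlgebra.coeff_add, Finsupp.add_apply, ihv, ihw]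
  | smul _ _ _ ih => simp only [MonoidAlgebra.coeff_smul, Finsupp.smul_apply, ih]

lemma subset_of_isASet {S X : Finset G} (hS : A.IsASet S) (hX : X ∈ A.parts) {x : G}
    (hx : x ∈ X) (hxS : x ∈ S) : X ⊆ S := by
  intro y hy
  have hcoeff := A.coeff_eq_of_mem_carrier hS hX hx hy
  by_contra hyS
  simp [coeff_grpInd, hxS, hyS] at hcoeff

lemma subset_mul_of_isASet {U V X : Finset G} (hU : A.IsASet U) (hV : A.IsASet V)
    (hX : X ∈ A.parts) {x : G} (hx : x ∈ X) (hxUV : x ∈ U * V) : X ⊆ U * V := by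
  intro y hy
  rw [← coeff_grpInd_mul_grpInd_pos_iff] at hxUV ⊢
  rwa [← A.coeff_eq_of_mem_carrier (A.mul_mem_carrier hU hV) hX hx hy]

variable {H K : Subgroup G} [DecidablePred (· ∈ H)] [DecidablePred (· ∈ K)]

theorem mul_inter_mem_parts (hH : A.IsASet (univ.filter (· ∈ H)))
    (hK : A.IsASet (univ.filter (· ∈ K))) (hHK : Disjoint H K) {X : Finset G}
    (hX : X ∈ A.parts) (hne : (X * univ.filter (· ∈ K) ∩ univ.filter (· ∈ H)).Nonempty) :
    X * univ.filter (· ∈ K) ∩ univ.filter (· ∈ H) ∈ A.parts := by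
  obtain ⟨y₀, hy₀⟩ := hne
  obtain ⟨W, hW, hy₀W⟩ := A.cover y₀
  simp only [mem_inter, mem_mul, mem_filter, mem_univ, true_and] at hy₀
  obtain ⟨⟨x₀, hx₀, k₀, hk₀, rfl⟩, hy₀H⟩ := hy₀
  have hWH : W ⊆ univ.filter (· ∈ H) := A.subset_of_isASet hH hW hy₀W (by simpa using hy₀H)
  have hWXK : W ⊆ X * univ.filter (· ∈ K) :=
    A.subset_mul_of_isASet (A.isASet_of_mem_parts hX) hK hW hy₀W
      (mul_mem_mul hx₀ (by simpa))
  have hXWK : X ⊆ W * univ.filter (· ∈ K) :=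
    A.subset_mul_of_isASet (A.isASet_of_mem_parts hW) hK hX hx₀
      (mem_mul.mpr ⟨_, hy₀W, k₀⁻¹, by simpa, by group⟩)
  convert hW
  refine Subset.antisymm (fun y hy => ?_) (subset_inter hWXK hWH)
  simp only [mem_inter, mem_mul, mem_filter, mem_univ, true_and] at hy
  obtain ⟨⟨x, hx, k, hk, rfl⟩, hxkH⟩ := hy
  obtain ⟨w, hw, k', hk', rfl⟩ := mem_mul.mp (hXWK hx)
  have hwH : w ∈ H := by simpa using hWH hw
  have hk'k : k' * k = 1 := Subgroup.disjoint_def.mp hHK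
    (by simpa [mul_assoc] using H.mul_mem (H.inv_mem hwH) hxkH) (K.mul_mem (by simpa using hk') hk)
  simpa [mul_assoc, hk'k] using hw

end SchurRing

section Prod

variable {G₁ G₂ : Type*} [Group G₁] [Group G₂]

lemma disjoint_range_inl_range_inr :
    Disjoint (MonoidHom.inl G₁ G₂).range (MonoidHom.inr G₁ G₂).range := by
  rw [Subgroup.disjoint_def]
  rintro _ ⟨a, rfl⟩ ⟨b, hb⟩
  simpa using (Prod.ext_iff.mp hb).1.symm

variable [Fintype G₁] [Fintype G₂] [DecidableEq G₁] [DecidableEq G₂]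

lemma filter_mem_range_inl :
    univ.filter (· ∈ (MonoidHom.inl G₁ G₂).range) = univ.image (fun g => (g, 1)) := by
  ext; simp

lemma filter_mem_range_inr :
    univ.filter (· ∈ (MonoidHom.inr G₁ G₂).range) = univ.image (fun g => (1, g)) := by
  ext; simp

lemma mul_filter_mem_range_inr_inter (X : Finset (G₁ × G₂)) :
    X * univ.filter (· ∈ (MonoidHom.inr G₁ G₂).range) ∩
      univ.filter (· ∈ (MonoidHom.inl G₁ G₂).range) = (X.image Prod.fst).image (fun g => (g, 1)) := by
  ext ⟨a, b⟩
  simp only [mem_inter, mem_mul, mem_filter, mem_univ, true_and, mem_image, MonoidHom.mem_range,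
    MonoidHom.inl_apply, MonoidHom.inr_apply, Prod.exists, Prod.mk_mul_mk, Prod.mk.injEq,
    exists_exists_eq_and, mul_one, exists_and_left, exists_eq_left, exists_and_right, exists_eq_right]
  constructor
  · rintro ⟨⟨_, c, hc, rfl, -⟩, rfl⟩
    exact ⟨_, ⟨c, hc⟩, rfl, rfl⟩
  · rintro ⟨_, ⟨c, hc⟩, rfl, rfl⟩
    exact ⟨⟨_, c, hc, rfl, c⁻¹, mul_inv_cancel c⟩, rfl⟩

lemma mul_filter_mem_range_inl_inter (X : Finset (G₁ × G₂)) :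
    X * univ.filter (· ∈ (MonoidHom.inl G₁ G₂).range) ∩
      univ.filter (· ∈ (MonoidHom.inr G₁ G₂).range) = (X.image Prod.snd).image (fun g => (1, g)) := by
  ext ⟨a, b⟩
  simp only [mem_inter, mem_mul, mem_filter, mem_univ, true_and, mem_image, MonoidHom.mem_range,
    MonoidHom.inl_apply, MonoidHom.inr_apply, Prod.exists, Prod.mk_mul_mk, Prod.mk.injEq,
    exists_exists_eq_and, mul_one, exists_and_left, exists_and_right, exists_eq_right]
  constructor
  · rintro ⟨⟨c, _, hc, -, rfl⟩, rfl, -⟩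
    exact ⟨_, ⟨c, hc⟩, rfl, rfl⟩
  · rintro ⟨_, ⟨c, hc⟩, rfl, rfl⟩
    exact ⟨⟨c, _, hc, ⟨c⁻¹, mul_inv_cancel c⟩, rfl⟩, rfl, _, rfl⟩

end Prod

/-- if `G = G₁ × G₂` with `G₁`, `G₂` both `A`-subgroups, then the projection
of every basic set to each factor (viewed inside `G`) is a basic set. -/
theorem stmt9 {G₁ G₂ : Type*} [CommGroup G₁] [CommGroup G₂]
    [Fintype G₁] [Fintype G₂] [DecidableEq G₁] [DecidableEq G₂]
    (A : SchurRing (G₁ × G₂))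
    (h₁ : A.IsASet (Finset.univ.image (fun g : G₁ => (g, (1 : G₂)))))
    (h₂ : A.IsASet (Finset.univ.image (fun g : G₂ => ((1 : G₁), g)))) :
    ∀ X ∈ A.parts,
      (X.image Prod.fst).image (fun g : G₁ => (g, (1 : G₂))) ∈ A.parts ∧
      (X.image Prod.snd).image (fun g : G₂ => ((1 : G₁), g)) ∈ A.parts := by
  rw [← filter_mem_range_inl] at h₁
  rw [← filter_mem_range_inr] at h₂
  intro X hX
  have hne := A.nonempty_mem X hX
  rw [← mul_filter_mem_range_inr_inter, ← mul_filter_mem_range_inl_inter]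
  refine ⟨A.mul_inter_mem_parts h₁ h₂ disjoint_range_inl_range_inr hX ?_,
    A.mul_inter_mem_parts h₂ h₁ disjoint_range_inl_range_inr.symm hX ?_⟩
  · rw [mul_filter_mem_range_inr_inter]; exact (hne.image _).image _
  · rw [mul_filter_mem_range_inl_inter]; exact (hne.image _).image _
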